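/- Let λ be a partition into distinct parts with associated numerical set S_λ (whose complement is the set of parts of λ) and Young diagram Y = KN(S_λ). Then λ is unrefinable if and only if every hook length of a cell of Y either (a) occurs as a hook length in the first column of Y (i.e., is a part of λ), or (b) equals exactly half of the hook length of the cell in the first column of the same row. -/

import Mathlib

/-- A partition into distinct parts, encoded as a `Finset ℕ` of its parts, is *refinable*
if some part can be replaced by two or more distinct positive integers, none of which is
already a part, summing to it. -/
def Refinable (P : Finset ℕ) : Prop :=
  ∃ a ∈ P, ∃ B : Finset ℕ, 2 ≤ B.card ∧ (∀ b ∈ B, 0 < b ∧ b ∉ P) ∧ B.sum id = a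

/-- The `i`-th largest element (0-based) of `P`. -/
def partDesc (P : Finset ℕ) (i : ℕ) : ℕ := ((P.sort (· ≤ ·)).reverse).getD i 0

/-- Length of the `i`-th row (0-based) of the Young diagram obtained from the numerical
set `ℕ \ P` via the Keith–Nath transformation: the number of east steps (elements of the
numerical set) preceding the north step at the `i`-th largest gap. -/
def knRow (P : Finset ℕ) (i : ℕ) : ℕ :=
  ((Finset.range (partDesc P i)).filter (fun s => s ∉ P)).card

/-- Length of the `j`-th column (0-based) of the Keith–Nath Young diagram. -/
def knCol (P : Finset ℕ) (j : ℕ) : ℕ :=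
  ((Finset.range P.card).filter (fun i => j < knRow P i)).card

/-- Hook length of the cell `(i, j)` (0-based) of the Keith–Nath Young diagram:
arm + leg + 1. -/
def knHook (P : Finset ℕ) (i j : ℕ) : ℕ := knRow P i + knCol P j - i - j - 1

/-- Total number of cells of the Keith–Nath Young diagram. -/
def knCells (P : Finset ℕ) : ℕ := ∑ i ∈ Finset.range P.card, knRow P i

/-!
Write `a_i` for the `i`-th largest part and `s_j` for the `j`-th element of the numerical set
`ℕ \ P`. Counting east and north steps of the Keith–Nath path shows that the cell `(i, j)`
lies in the diagram iff `s_j < a_i`, and that its hook length is then `a_i - s_j`; the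
first-column hooks are the parts themselves. So the hook condition says: whenever a part
`a` exceeds a non-part `s`, either `a - s` is a part or `s = a - s`. This is unrefinability,
because a refinement of a part can always be shortened to one with two summands: if
`a = b + c` with `b` a summand, `2 b ≠ a`, and `c` the sum of the others, then either `c` is
a non-part or `c` is a part refined by the remaining summands.
-/

section PartDesc

variable (P : Finset ℕ)

lemma partDesc_eq_getElem {i : ℕ} (hi : i < P.card) :
    partDesc P i = (P.sort (· ≤ ·)).reverse[i]'(by simpa using hi) :=
  List.getD_eq_getElem _ _ _

lemma partDesc_mem {i : ℕ} (hi : i < P.card) : partDesc P i ∈ P := by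
  rw [partDesc_eq_getElem P hi, ← Finset.mem_sort (· ≤ ·), ← List.mem_reverse]
  exact List.getElem_mem _

lemma partDesc_strictAntiOn : StrictAntiOn (partDesc P) (Set.Iio P.card) := by
  intro i hi i' hi' h
  rw [partDesc_eq_getElem P hi, partDesc_eq_getElem P hi']
  exact (List.sortedGT_reverse.2 P.sortedLT_sort).getElem_lt_getElem_iff.2 h

lemma partDesc_injOn : Set.InjOn (partDesc P) (Finset.range P.card) := by
  simpa [Set.Iio] using (partDesc_strictAntiOn P).injOn

lemma image_partDesc : (Finset.range P.card).image (partDesc P) = P := by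
  refine Finset.eq_of_subset_of_card_le ?_ ?_
  · simpa [Finset.image_subset_iff] using fun i hi => partDesc_mem P hi
  · rw [Finset.card_image_of_injOn (partDesc_injOn P), Finset.card_range]

lemma card_filter_partDesc (Q : ℕ → Prop) [DecidablePred Q] :
    ((Finset.range P.card).filter (fun i => Q (partDesc P i))).card = (P.filter Q).card := by
  conv_rhs => rw [← image_partDesc P, Finset.filter_image]
  refine (Finset.card_image_of_injOn ((partDesc_injOn P).mono ?_)).symm
  exact Finset.coe_subset.2 (Finset.filter_subset _ _)

lemma card_filter_lt_partDesc {i : ℕ} (hi : i < P.card) :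
    (P.filter (· < partDesc P i)).card = P.card - 1 - i := by
  rw [← card_filter_partDesc]
  have : (Finset.range P.card).filter (fun i' => partDesc P i' < partDesc P i)
      = Finset.Ioo i P.card := by
    ext i'
    simp only [Finset.mem_filter, Finset.mem_range, Finset.mem_Ioo]
    constructor
    · rintro ⟨hi', h⟩
      exact ⟨((partDesc_strictAntiOn P).lt_iff_gt hi' hi).1 h, hi'⟩
    · rintro ⟨h, hi'⟩
      exact ⟨hi', partDesc_strictAntiOn P hi hi' h⟩
  rw [this, Nat.card_Ioo]
  omega

end PartDesc

section NumericalSet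

variable (P : Finset ℕ)

lemma infinite_setOf_notMem : (Set.ofPred (· ∉ P)).Infinite :=
  P.finite_toSet.infinite_compl

lemma count_notMem_add_card_filter_lt (m : ℕ) :
    Nat.count (· ∉ P) m + (P.filter (· < m)).card = m := by
  have : P.filter (· < m) = (Finset.range m).filter (· ∈ P) := by
    ext x; simp [and_comm]
  rw [Nat.count_eq_card_filter_range, this, add_comm, Finset.card_filter_add_card_filter_not,
    Finset.card_range]

lemma knRow_eq_count (i : ℕ) : knRow P i = Nat.count (· ∉ P) (partDesc P i) :=
  (Nat.count_eq_card_filter_range _ _).symm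

lemma lt_knRow_iff {i j : ℕ} : j < knRow P i ↔ Nat.nth (· ∉ P) j < partDesc P i := by
  rw [knRow_eq_count]
  exact Nat.lt_nth_iff_count_lt (infinite_setOf_notMem P)

lemma knRow_add {i : ℕ} (hi : i < P.card) : knRow P i + (P.card - 1 - i) = partDesc P i := by
  rw [knRow_eq_count, ← card_filter_lt_partDesc P hi]
  exact count_notMem_add_card_filter_lt P _

lemma card_filter_lt_nth_add (j : ℕ) :
    (P.filter (· < Nat.nth (· ∉ P) j)).card + j = Nat.nth (· ∉ P) j := by
  have h := count_notMem_add_card_filter_lt P (Nat.nth (· ∉ P) j)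
  rw [Nat.count_nth_of_infinite (infinite_setOf_notMem P)] at h
  omega

lemma knCol_add (j : ℕ) : knCol P j + (Nat.nth (· ∉ P) j - j) = P.card := by
  have hcol : knCol P j = (P.filter (Nat.nth (· ∉ P) j < ·)).card := by
    rw [knCol, ← card_filter_partDesc P]
    simp only [lt_knRow_iff]
  have hnth : Nat.nth (· ∉ P) j ∉ P := Nat.nth_mem_of_infinite (infinite_setOf_notMem P) j
  have hsplit : P.filter (Nat.nth (· ∉ P) j < ·) = P.filter (¬ · < Nat.nth (· ∉ P) j) := by
    refine Finset.filter_congr fun p hp => ?_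
    rw [not_lt]
    exact ⟨le_of_lt, fun h => h.lt_of_ne (ne_of_mem_of_not_mem hp hnth).symm⟩
  have hbelow := card_filter_lt_nth_add P j
  have hcard := Finset.card_filter_add_card_filter_not (s := P) (p := (· < Nat.nth (· ∉ P) j))
  rw [hcol, hsplit]
  omega

lemma knHook_eq_sub {i j : ℕ} (hi : i < P.card) (hj : j < knRow P i) :
    knHook P i j = partDesc P i - Nat.nth (· ∉ P) j := by
  have hrow := knRow_add P hi
  have hcol := knCol_add P j
  have hlt := (lt_knRow_iff P).1 hj
  have hbelow := card_filter_lt_nth_add P j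
  rw [knHook]
  omega

end NumericalSet

lemma knHook_zero {P : Finset ℕ} (h0 : 0 ∉ P) {i : ℕ} (hi : i < P.card) :
    knHook P i 0 = partDesc P i := by
  have hnth : Nat.nth (· ∉ P) 0 = 0 := Nat.nth_zero_of_zero h0
  have hpos : 0 < partDesc P i :=
    Nat.pos_of_ne_zero fun h => h0 (h ▸ partDesc_mem P hi)
  have hj : 0 < knRow P i := by rwa [lt_knRow_iff, hnth]
  rw [knHook_eq_sub P hi hj, hnth, Nat.sub_zero]

lemma forall_knHook_iff {P : Finset ℕ} (h0 : 0 ∉ P) :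
    (∀ i j : ℕ, i < P.card → j < knRow P i →
        (knHook P i j ∈ P ∨ 2 * knHook P i j = knHook P i 0)) ↔
      ∀ a ∈ P, ∀ s ∉ P, s < a → a - s ∈ P ∨ 2 * (a - s) = a := by
  constructor
  · intro hhook a ha s hs hsa
    rw [← image_partDesc P, Finset.mem_image] at ha
    obtain ⟨i, hi, rfl⟩ := ha
    rw [Finset.mem_range] at hi
    have hnth : Nat.nth (· ∉ P) (Nat.count (· ∉ P) s) = s := Nat.nth_count hs
    have hj : Nat.count (· ∉ P) s < knRow P i := by rwa [lt_knRow_iff, hnth]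
    simpa only [knHook_eq_sub P hi hj, hnth, knHook_zero h0 hi] using hhook i _ hi hj
  · intro hparts i j hi hj
    rw [knHook_eq_sub P hi hj, knHook_zero h0 hi]
    exact hparts _ (partDesc_mem P hi) _ (Nat.nth_mem_of_infinite (infinite_setOf_notMem P) j)
      ((lt_knRow_iff P).1 hj)

lemma exists_pair_of_sum_mem (P : Finset ℕ) (B : Finset ℕ) (hB : 2 ≤ B.card)
    (hBP : ∀ b ∈ B, b ∉ P) (hsum : B.sum id ∈ P) :
    ∃ s t, s ∉ P ∧ t ∉ P ∧ s ≠ t ∧ s + t ∈ P := by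
  induction B using Finset.strongInduction with
  | H B ih =>
  obtain ⟨b₁, hb₁, b₂, hb₂, hne⟩ := Finset.one_lt_card.1 hB
  obtain ⟨b, hb, hhalf⟩ : ∃ b ∈ B, 2 * b ≠ B.sum id := by
    by_cases h : 2 * b₁ = B.sum id
    · exact ⟨b₂, hb₂, by omega⟩
    · exact ⟨b₁, hb₁, h⟩
  have hsplit : (B.erase b).sum id + b = B.sum id := Finset.sum_erase_add B id hb
  by_cases hrest : (B.erase b).sum id ∈ P
  · have hrest_card : 2 ≤ (B.erase b).card := by
      by_contra hlt
      have hcard : (B.erase b).card + 1 = B.card := Finset.card_erase_add_one hb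
      obtain ⟨c, hc⟩ := Finset.card_eq_one.1 (show (B.erase b).card = 1 by omega)
      rw [hc, Finset.sum_singleton] at hrest
      exact hBP c (Finset.mem_of_mem_erase (hc ▸ Finset.mem_singleton_self c)) hrest
    exact ih _ (Finset.erase_ssubset hb) hrest_card
      (fun x hx => hBP x (Finset.mem_of_mem_erase hx)) hrest
  · exact ⟨b, (B.erase b).sum id, hBP b hb, hrest, by omega, by rwa [add_comm, hsplit]⟩

lemma not_refinable_iff (P : Finset ℕ) :
    ¬ Refinable P ↔ ∀ a ∈ P, ∀ s ∉ P, s < a → a - s ∈ P ∨ 2 * (a - s) = a := by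
  constructor
  · intro hnr a ha s hs hsa
    by_contra! h
    have hs0 : s ≠ 0 := by rintro rfl; exact h.1 ha
    refine hnr ⟨a, ha, {s, a - s}, ?_, ?_, ?_⟩
    · rw [Finset.card_pair (by omega)]
    · simp only [Finset.mem_insert, Finset.mem_singleton]
      rintro b (rfl | rfl)
      exacts [⟨by omega, hs⟩, ⟨by omega, h.1⟩]
    · rw [Finset.sum_pair (by omega), id, id]
      omega
  · rintro hparts ⟨a, ha, B, hB, hBP, rfl⟩
    obtain ⟨s, t, hs, ht, hst, hmem⟩ :=
      exists_pair_of_sum_mem P B hB (fun b hb => (hBP b hb).2) ha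
    have ht0 : t ≠ 0 := by rintro rfl; exact hs hmem
    rcases hparts _ hmem s hs (by omega) with h | h
    · exact ht (by simpa using h)
    · omega

theorem stmt6_general (P : Finset ℕ) (hpos : ∀ p ∈ P, 0 < p) :
    ¬ Refinable P ↔
      (∀ i j : ℕ, i < P.card → j < knRow P i →
        (knHook P i j ∈ P ∨ 2 * knHook P i j = knHook P i 0)) := by
  rw [not_refinable_iff, forall_knHook_iff fun h => (hpos 0 h).false]

/-- Geometric criterion for unrefinability: a partition into distinct parts is unrefinable
iff every hook length of the Keith–Nath Young diagram of its numerical set either is a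
part of the partition (i.e. occurs in the first column), or equals half the hook length
of the first-column cell in the same row. -/
theorem stmt6 (P : Finset ℕ) (hpos : ∀ p ∈ P, 0 < p) (hcard : 2 ≤ P.card) :
    ¬ Refinable P ↔
      (∀ i j : ℕ, i < P.card → j < knRow P i →
        (knHook P i j ∈ P ∨ 2 * knHook P i j = knHook P i 0)) :=
  stmt6_general P hpos
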